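/- Let G be a minimally nonperfectly divisible graph. Then for every nonempty subset X ⊆ V(G), |N(X)| ≥ ω(G) − ω(G[X]). -/
import Mathlib


open SimpleGraph

variable {V : Type}

/-- The clique number of the subgraph of `G` induced on `S`. -/
noncomputable def omegaOn (G : SimpleGraph V) (S : Set V) : ℕ :=
  sSup {n | ∃ s : Finset V, ↑s ⊆ S ∧ G.IsNClique n s}

/-- The subgraph of `G` induced on `S` is a perfect graph. -/
def IsPerfectOn (G : SimpleGraph V) (S : Set V) : Prop :=
  ∀ T : Set V, T ⊆ S → (G.induce T).chromaticNumber = (omegaOn G T : ℕ∞)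

/-- Every nonempty induced subgraph of `G[S]` admits a perfect division. -/
def PerfDivOn (G : SimpleGraph V) (S : Set V) : Prop :=
  ∀ H : Set V, H ⊆ S → H.Nonempty →
    ∃ A B : Set V, A ∪ B = H ∧ Disjoint A B ∧
      IsPerfectOn G A ∧ omegaOn G B < omegaOn G H

/-- `G` is minimally nonperfectly divisible. -/
def MNPD (G : SimpleGraph V) : Prop :=
  ¬ PerfDivOn G Set.univ ∧ ∀ S : Set V, S ≠ Set.univ → PerfDivOn G S

/-- The external neighbourhood `N(X)`. -/
def extNbhd (G : SimpleGraph V) (X : Set V) : Set V :=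
  {v | v ∉ X ∧ ∃ x ∈ X, G.Adj v x}

lemma omega_bddAbove [Fintype V] (G : SimpleGraph V) (S : Set V) :
    BddAbove {n | ∃ s : Finset V, ↑s ⊆ S ∧ G.IsNClique n s} :=
  ⟨Fintype.card V, fun n ⟨s, _, hs⟩ => hs.2 ▸ Finset.card_le_univ s⟩

lemma omega_set_nonempty (G : SimpleGraph V) (S : Set V) :
    Set.Nonempty {n | ∃ s : Finset V, ↑s ⊆ S ∧ G.IsNClique n s} :=
  ⟨0, ∅, by simp, by simp⟩

lemma le_omegaOn [Fintype V] (G : SimpleGraph V) {S : Set V} {s : Finset V}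
    (h1 : ↑s ⊆ S) (h2 : G.IsClique ↑s) : s.card ≤ omegaOn G S :=
  le_csSup (omega_bddAbove G S) ⟨s, h1, h2, rfl⟩

lemma omegaOn_mono [Fintype V] (G : SimpleGraph V) {S T : Set V} (h : S ⊆ T) :
    omegaOn G S ≤ omegaOn G T :=
  csSup_le_csSup (omega_bddAbove G T) (omega_set_nonempty G S)
    (fun n ⟨s, h1, h2⟩ => ⟨s, h1.trans h, h2⟩)

lemma omegaOn_lt [Fintype V] (G : SimpleGraph V) {S : Set V} {k : ℕ} (hk : 0 < k)
    (h : ∀ s : Finset V, ↑s ⊆ S → G.IsClique ↑s → s.card < k) : omegaOn G S < k := by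
  have h1 : omegaOn G S ≤ k - 1 := by
    apply csSup_le (omega_set_nonempty G S)
    rintro n ⟨s, hs1, hs2⟩
    have := h s hs1 hs2.1
    have := hs2.2
    omega
  omega

theorem stmt_8 [Fintype V] (G : SimpleGraph V) (hG : MNPD G) :
    ∀ X : Set V, X.Nonempty →
      omegaOn G Set.univ - omegaOn G X ≤ (extNbhd G X).ncard := by
  classical
  intro X hX
  by_contra hcon
  push_neg at hcon
  have key : omegaOn G X + (extNbhd G X).ncard < omegaOn G Set.univ := by omega
  -- Xᶜ is a proper subset (since X is nonempty) and nonempty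
  have hXcne : Xᶜ ≠ Set.univ := by
    intro h
    obtain ⟨x, hx⟩ := hX
    have : x ∈ (Xᶜ : Set V) := h ▸ Set.mem_univ x
    exact this hx
  have hXc : (Xᶜ : Set V).Nonempty := by
    by_contra h
    rw [Set.not_nonempty_iff_eq_empty, Set.compl_empty_iff] at h
    subst h
    omega
  obtain ⟨A, B, hAB, hdisj, hperf, hB⟩ := hG.2 Xᶜ hXcne Xᶜ subset_rfl hXc
  -- build a perfect division of the whole graph, contradicting MNPD
  apply hG.1
  intro H _ hHne
  by_cases hHu : H = Set.univ
  · subst hHu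
    refine ⟨A, B ∪ X, ?_, ?_, hperf, ?_⟩
    · rw [← Set.union_assoc, hAB, Set.compl_union_self]
    · have hAsub : A ⊆ Xᶜ := hAB ▸ Set.subset_union_left
      refine Set.disjoint_union_right.2 ⟨hdisj, ?_⟩
      exact Disjoint.mono_left hAsub disjoint_compl_left
    · apply omegaOn_lt G (by omega)
      intro s hs hcl
      by_cases hsX : ∃ x ∈ s, x ∈ X
      · obtain ⟨x, hxs, hxX⟩ := hsX
        -- vertices of s outside X lie in extNbhd G X
        have hout : ∀ v ∈ s, v ∉ X → v ∈ extNbhd G X := by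
          intro v hvs hvX
          refine ⟨hvX, x, hxX, ?_⟩
          exact hcl hvs hxs (fun h => hvX (h ▸ hxX))
        have hsplit : (s.filter (· ∈ X)).card + (s.filter (· ∉ X)).card = s.card :=
          Finset.card_filter_add_card_filter_not (fun v => v ∈ X)
        have h1 : (s.filter (· ∈ X)).card ≤ omegaOn G X := by
          apply le_omegaOn G
          · intro v hv
            simp only [Finset.coe_filter, Set.mem_setOf_eq] at hv
            exact hv.2
          · exact hcl.subset (Finset.coe_subset.2 (Finset.filter_subset _ _))
        have h2 : (s.filter (· ∉ X)).card ≤ (extNbhd G X).ncard := by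
          rw [← Set.ncard_coe_finset]
          apply Set.ncard_le_ncard _ (Set.toFinite _)
          intro v hv
          simp only [Finset.coe_filter, Set.mem_setOf_eq] at hv
          exact hout v hv.1 hv.2
        omega
      · push_neg at hsX
        have hsB : ↑s ⊆ B := by
          intro v hv
          rcases hs hv with h | h
          · exact h
          · exact absurd h (hsX v hv)
        have := le_omegaOn G hsB hcl
        have h2 := omegaOn_mono G (Set.subset_univ Xᶜ)
        omega
  · exact hG.2 H hHu H subset_rfl hHne
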